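/- Let b, c > 0, λ > 0, a ∈ ℝ, and consider z solving z'' + bλ z' + c²λ z = a ψ(t), z(0) = z'(0) = 0, where ψ is continuous and bounded. If a = 0 then z ≡ 0; conversely, if b²λ > 4c², ψ̂(p_+) ≠ 0 (Laplace transform of ψ at the root p_+), and ẑ ≡ 0 on a right half-plane, then a = 0. -/

import Mathlib

/-!
Gronwall's inequality for the phase vector `(z, z')` gives `|z t| ≤ (|a| sup |ψ| / K) e^{K t}`.
So `z ≡ 0` when `a = 0`, and in general `z` has exponential growth, which makes it determined
by its Laplace transform on a half-line. For `w t = e^{-s₀ t} z t` with `s₀` large, the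
vanishing of `ẑ(s₀ + n)` for all `n` says that the measure `w t dt`, pushed to `[0, 1]` by
`x = e^{-t}`, kills every polynomial, hence (Weierstrass) every continuous function; testing it
against `x ↦ x w(-log x)` gives `∫ e^{-t} w² = 0`. Thus `z ≡ 0` on `(0, ∞)`, the equation gives
`a ψ ≡ 0` there, and `ψ̂(p₊) ≠ 0` forces `a = 0`.
-/

open Set MeasureTheory Filter Topology

theorem abs_le_gronwallBound_of_deriv_deriv_add {p q ε : ℝ} {z : ℝ → ℝ} (hz : ContDiff ℝ 2 z)
    (hode : ∀ t ≥ (0 : ℝ), |deriv (deriv z) t + p * deriv z t + q * z t| ≤ ε)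
    (hz0 : z 0 = 0) (hz0' : deriv z 0 = 0) {t : ℝ} (ht : 0 ≤ t) :
    |z t| ≤ gronwallBound 0 (|p| + |q| + 1) ε t := by
  have hz1 : Differentiable ℝ z := hz.differentiable (by norm_num)
  have hz2 : ContDiff ℝ 1 (deriv z) := hz.deriv'
  have hphase : ∀ x ≥ (0 : ℝ), ‖(deriv z x, deriv (deriv z) x)‖
      ≤ (|p| + |q| + 1) * ‖(z x, deriv z x)‖ + ε := by
    intro x hx
    set m := ‖(z x, deriv z x)‖
    have hm1 : |z x| ≤ m := norm_fst_le (z x, deriv z x)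
    have hm2 : |deriv z x| ≤ m := norm_snd_le (z x, deriv z x)
    have hz'' : |deriv (deriv z) x| ≤ ε + |p| * m + |q| * m := by
      calc |deriv (deriv z) x|
          = |(deriv (deriv z) x + p * deriv z x + q * z x) + -(p * deriv z x) + -(q * z x)| := by
            ring_nf
        _ ≤ ε + |p| * |deriv z x| + |q| * |z x| := by
            grw [abs_add_three, abs_neg, abs_neg, abs_mul, abs_mul, hode x hx]
        _ ≤ ε + |p| * m + |q| * m := by gcongr
    rw [Prod.norm_mk, Real.norm_eq_abs, Real.norm_eq_abs]
    have hm : 0 ≤ m := norm_nonneg _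
    have hpqm : 0 ≤ (|p| + |q|) * m := by positivity
    have hε : 0 ≤ ε := (abs_nonneg _).trans (hode x hx)
    exact max_le (by linarith) (by linarith)
  have key := norm_le_gronwallBound_of_norm_deriv_right_le
    (f := fun s => (z s, deriv z s)) (δ := 0) (f' := fun s => (deriv z s, deriv (deriv z) s))
    (hz1.continuous.prodMk hz2.continuous).continuousOn
    (fun x _ => ((hz1 x).hasDerivAt.prodMk
      ((hz2.differentiable one_ne_zero x).hasDerivAt)).hasDerivWithinAt)
    (by simp [hz0, hz0']) (fun x hx => hphase x hx.1) t ⟨ht, le_rfl⟩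
  simpa using (norm_fst_le (z t, deriv z t)).trans key

theorem gronwallBound_zero_le_mul_exp {K ε : ℝ} (hK : 0 < K) (hε : 0 ≤ ε) (x : ℝ) :
    gronwallBound 0 K ε x ≤ ε / K * Real.exp (K * x) := by
  rw [gronwallBound_of_K_ne_0 hK.ne']
  have : 0 ≤ ε / K := by positivity
  nlinarith

section MomentsOnHalfLine

variable {w : ℝ → ℝ}

theorem integrableOn_comp_exp_neg_mul (hw : IntegrableOn w (Ioi 0)) {g : ℝ → ℝ}
    (hg : ContinuousOn g (Icc 0 1)) :
    IntegrableOn (fun t => g (Real.exp (-t)) * w t) (Ioi 0) := by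
  have hmaps : MapsTo (fun t => Real.exp (-t)) (Ioi 0) (Icc 0 1) := fun t ht =>
    ⟨(Real.exp_pos _).le, Real.exp_le_one_iff.2 (neg_nonpos.2 (le_of_lt ht))⟩
  obtain ⟨C, hC⟩ := isCompact_Icc.exists_bound_of_continuousOn hg
  refine hw.bdd_mul (c := C) ?_ ?_
  · exact (hg.comp (Real.continuous_exp.comp continuous_neg).continuousOn hmaps).aestronglyMeasurable
      measurableSet_Ioi
  · exact (ae_restrict_iff' measurableSet_Ioi).2 (ae_of_all _ fun t ht => hC _ (hmaps ht))

theorem setIntegral_eval_exp_neg_mul_eq_zero (hw : IntegrableOn w (Ioi 0))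
    (hmom : ∀ n : ℕ, ∫ t in Ioi 0, Real.exp (-t) ^ n * w t = 0) (p : Polynomial ℝ) :
    ∫ t in Ioi 0, p.eval (Real.exp (-t)) * w t = 0 := by
  simp_rw [Polynomial.eval_eq_sum_range, Finset.sum_mul, mul_assoc]
  rw [integral_finsetSum]
  · exact Finset.sum_eq_zero fun i _ => by rw [integral_const_mul, hmom i, mul_zero]
  · exact fun i _ => (integrableOn_comp_exp_neg_mul hw (continuousOn_pow i)).const_mul _

theorem setIntegral_comp_exp_neg_mul_eq_zero (hw : IntegrableOn w (Ioi 0))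
    (hmom : ∀ n : ℕ, ∫ t in Ioi 0, Real.exp (-t) ^ n * w t = 0) {g : ℝ → ℝ}
    (hg : ContinuousOn g (Icc 0 1)) :
    ∫ t in Ioi 0, g (Real.exp (-t)) * w t = 0 := by
  set A := ∫ t in Ioi 0, ‖w t‖
  have hA : 0 ≤ A := setIntegral_nonneg measurableSet_Ioi fun t _ => norm_nonneg (w t)
  have hle : ∀ ε > 0, ‖∫ t in Ioi 0, g (Real.exp (-t)) * w t‖ ≤ ε * A := by
    intro ε hε
    obtain ⟨p, hp⟩ := exists_polynomial_near_of_continuousOn 0 1 g hg ε hε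
    have hdiff : ∫ t in Ioi 0, g (Real.exp (-t)) * w t
        = ∫ t in Ioi 0, (g (Real.exp (-t)) - p.eval (Real.exp (-t))) * w t := by
      simp_rw [sub_mul]
      rw [integral_sub (integrableOn_comp_exp_neg_mul hw hg)
        (integrableOn_comp_exp_neg_mul hw p.continuous.continuousOn),
        setIntegral_eval_exp_neg_mul_eq_zero hw hmom, sub_zero]
    rw [hdiff, ← integral_const_mul]
    refine norm_integral_le_of_norm_le (hw.norm.const_mul ε)
      ((ae_restrict_iff' measurableSet_Ioi).2 (ae_of_all _ fun t ht => ?_))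
    have hmem : Real.exp (-t) ∈ Icc (0 : ℝ) 1 :=
      ⟨(Real.exp_pos _).le, Real.exp_le_one_iff.2 (neg_nonpos.2 (le_of_lt ht))⟩
    rw [norm_mul, Real.norm_eq_abs, abs_sub_comm]
    exact mul_le_mul_of_nonneg_right (hp _ hmem).le (norm_nonneg _)
  refine norm_le_zero_iff.1 (le_of_forall_pos_le_add fun δ hδ => ?_)
  calc _ ≤ δ / (A + 1) * A := hle _ (by positivity)
    _ ≤ 0 + δ := by
      rw [zero_add, div_mul_eq_mul_div, div_le_iff₀ (by positivity)]
      nlinarith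

end MomentsOnHalfLine

theorem continuousOn_mul_comp_neg_log {w : ℝ → ℝ} (hw : Continuous w) {M : ℝ}
    (hM : ∀ t ≥ (0 : ℝ), |w t| ≤ M) :
    ContinuousOn (fun x => x * w (-Real.log x)) (Icc 0 1) := by
  intro x hx
  rcases hx.1.eq_or_lt with rfl | hx0
  · have hbound : ∀ᶠ y in 𝓝[Icc 0 1] (0 : ℝ), ‖y * w (-Real.log y)‖ ≤ y * M := by
      filter_upwards [self_mem_nhdsWithin] with y hy
      rw [norm_mul, Real.norm_eq_abs, abs_of_nonneg hy.1]
      exact mul_le_mul_of_nonneg_left (hM _ (neg_nonneg.2 (Real.log_nonpos hy.1 hy.2))) hy.1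
    have hlim : Tendsto (fun y => y * M) (𝓝[Icc 0 1] (0 : ℝ)) (𝓝 0) := by
      simpa using ((continuous_mul_const M).tendsto 0).mono_left nhdsWithin_le_nhds
    simpa [ContinuousWithinAt] using squeeze_zero_norm' hbound hlim
  · exact (continuousAt_id.mul (hw.continuousAt.comp
      (Real.continuousAt_log hx0.ne').neg)).continuousWithinAt

theorem eqOn_zero_of_setIntegral_eq_zero {X : Type*} [TopologicalSpace X] [MeasurableSpace X]
    {μ : Measure X} [μ.IsOpenPosMeasure] {U : Set X} (hU : IsOpen U) {f : X → ℝ}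
    (hf : Continuous f) (hf0 : 0 ≤ f) (hint : IntegrableOn f U μ) (h : ∫ x in U, f x ∂μ = 0) :
    EqOn f 0 U :=
  Measure.eqOn_open_of_ae_eq ((setIntegral_eq_zero_iff_of_nonneg_ae (ae_of_all _ hf0) hint).1 h)
    hU hf.continuousOn continuousOn_const

theorem eqOn_zero_of_setIntegral_exp_neg_mul_eq_zero {z : ℝ → ℝ} (hz : Continuous z)
    {M K σ : ℝ} (hgrow : ∀ t ≥ (0 : ℝ), |z t| ≤ M * Real.exp (K * t))
    (hσ : ∀ s > σ, ∫ t in Ioi (0 : ℝ), Real.exp (-s * t) * z t = 0) :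
    EqOn z 0 (Ioi 0) := by
  set s₀ := max σ K + 1
  set w : ℝ → ℝ := fun t => Real.exp (-s₀ * t) * z t
  have hwc : Continuous w := by fun_prop
  have hM : 0 ≤ M := by simpa using (abs_nonneg _).trans (hgrow 0 le_rfl)
  have hw_decay : ∀ t ≥ (0 : ℝ), |w t| ≤ M * Real.exp (-t) := by
    intro t ht
    have hexp : Real.exp (-s₀ * t) * Real.exp (K * t) ≤ Real.exp (-t) := by
      rw [← Real.exp_add, Real.exp_le_exp]
      nlinarith [le_max_right σ K]
    calc |w t| = Real.exp (-s₀ * t) * |z t| := by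
          rw [abs_mul, abs_of_pos (Real.exp_pos _)]
      _ ≤ Real.exp (-s₀ * t) * (M * Real.exp (K * t)) := by gcongr; exact hgrow t ht
      _ ≤ M * Real.exp (-t) := by nlinarith [Real.exp_pos (-s₀ * t)]
  have hw_bdd : ∀ t ≥ (0 : ℝ), |w t| ≤ M := fun t ht =>
    (hw_decay t ht).trans (mul_le_of_le_one_right hM (Real.exp_le_one_iff.2 (by linarith)))
  have hw_int : IntegrableOn w (Ioi 0) := by
    refine Integrable.mono' ((exp_neg_integrableOn_Ioi 0 one_pos).const_mul M)
      hwc.aestronglyMeasurable ((ae_restrict_iff' measurableSet_Ioi).2 (ae_of_all _ fun t ht => ?_))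
    simpa using hw_decay t (le_of_lt ht)
  have hmom : ∀ n : ℕ, ∫ t in Ioi 0, Real.exp (-t) ^ n * w t = 0 := by
    intro n
    have hσn : s₀ + n > σ := by
      have := le_max_left σ K; have : (0 : ℝ) ≤ n := n.cast_nonneg; linarith
    refine Eq.trans ?_ (hσ _ hσn)
    congr 1 with t
    rw [← Real.exp_nat_mul, ← mul_assoc, ← Real.exp_add]
    ring_nf
  have hsq : ∫ t in Ioi 0, Real.exp (-t) * w t ^ 2 = 0 := by
    refine Eq.trans ?_ (setIntegral_comp_exp_neg_mul_eq_zero hw_int hmom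
      (continuousOn_mul_comp_neg_log hwc hw_bdd))
    simp [sq, mul_assoc]
  have hsq_int : IntegrableOn (fun t => Real.exp (-t) * w t ^ 2) (Ioi 0) := by
    simpa [sq, mul_assoc] using
      integrableOn_comp_exp_neg_mul hw_int (continuousOn_mul_comp_neg_log hwc hw_bdd)
  intro t ht
  have h0 := eqOn_zero_of_setIntegral_eq_zero isOpen_Ioi (by fun_prop)
    (fun t => by positivity) hsq_int hsq ht
  simpa [w, (Real.exp_pos _).ne'] using h0

theorem stmt18_general (b c lam a : ℝ)
    (ψ z : ℝ → ℝ) (hψbd : ∃ C : ℝ, ∀ t, |ψ t| ≤ C)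
    (hz : ContDiff ℝ 2 z)
    (hode : ∀ t ≥ (0 : ℝ),
      deriv (deriv z) t + b * lam * deriv z t + c ^ 2 * lam * z t = a * ψ t)
    (hz0 : z 0 = 0) (hz0' : deriv z 0 = 0) :
    (a = 0 → ∀ t ≥ (0 : ℝ), z t = 0) ∧
    (4 * c ^ 2 < b ^ 2 * lam →
      (∫ t in Ioi (0 : ℝ),
          Real.exp (-(lam / 2 * (-b + Real.sqrt (b ^ 2 - 4 * c ^ 2 / lam))) * t)
            * ψ t) ≠ 0 →
      (∃ σ : ℝ, ∀ s > σ,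
          (∫ t in Ioi (0 : ℝ), Real.exp (-s * t) * z t) = 0) →
      a = 0) := by
  obtain ⟨C, hC⟩ := hψbd
  have hC0 : 0 ≤ C := (abs_nonneg _).trans (hC 0)
  set K := |b * lam| + |c ^ 2 * lam| + 1
  have hbound : ∀ t ≥ (0 : ℝ), |z t| ≤ gronwallBound 0 K (|a| * C) t := fun t ht =>
    abs_le_gronwallBound_of_deriv_deriv_add hz
      (fun s hs => by rw [hode s hs, abs_mul]; gcongr; exact hC s) hz0 hz0' ht
  refine ⟨fun ha t ht => ?_, fun _ hψp ⟨σ, hσ⟩ => ?_⟩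
  · simpa [ha, gronwallBound_ε0_δ0] using hbound t ht
  by_contra ha
  have hz_zero : EqOn z 0 (Ioi 0) :=
    eqOn_zero_of_setIntegral_exp_neg_mul_eq_zero hz.continuous (fun t ht => (hbound t ht).trans
      (gronwallBound_zero_le_mul_exp (by positivity) (by positivity) t)) hσ
  have hz' : EqOn (deriv z) 0 (Ioi 0) := by simpa using hz_zero.deriv isOpen_Ioi
  have hz'' : EqOn (deriv (deriv z)) 0 (Ioi 0) := by simpa using hz'.deriv isOpen_Ioi
  refine hψp (setIntegral_eq_zero_of_forall_eq_zero fun t ht => ?_)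
  have hψt := hode t (le_of_lt ht)
  simp only [hz'' ht, hz' ht, hz_zero ht, Pi.zero_apply, mul_zero, add_zero, zero_eq_mul] at hψt
  simp [hψt.resolve_left ha]

/-- One-mode injectivity: for `z'' + bλ z' + c²λ z = aψ`, `z(0) = z'(0) = 0`
with `ψ` continuous and bounded: if `a = 0` then `z ≡ 0` on `[0,∞)`;
conversely, if `b²λ > 4c²`, `ψ̂(p₊) ≠ 0`, and `ẑ ≡ 0` on a right half-line,
then `a = 0`. -/
theorem stmt18 (b c lam a : ℝ) (hb : 0 < b) (hc : 0 < c) (hlam : 0 < lam)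
    (ψ z : ℝ → ℝ) (hψ : Continuous ψ) (hψbd : ∃ C : ℝ, ∀ t, |ψ t| ≤ C)
    (hz : ContDiff ℝ 2 z)
    (hode : ∀ t ≥ (0 : ℝ),
      deriv (deriv z) t + b * lam * deriv z t + c ^ 2 * lam * z t = a * ψ t)
    (hz0 : z 0 = 0) (hz0' : deriv z 0 = 0) :
    (a = 0 → ∀ t ≥ (0 : ℝ), z t = 0) ∧
    (4 * c ^ 2 < b ^ 2 * lam →
      (∫ t in Ioi (0 : ℝ),
          Real.exp (-(lam / 2 * (-b + Real.sqrt (b ^ 2 - 4 * c ^ 2 / lam))) * t)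
            * ψ t) ≠ 0 →
      (∃ σ : ℝ, ∀ s > σ,
          (∫ t in Ioi (0 : ℝ), Real.exp (-s * t) * z t) = 0) →
      a = 0) :=
  stmt18_general b c lam a ψ z hψbd hz hode hz0 hz0'
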